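/- With negation defined via F(¬p) = Υ(⩒F(p)), where ⩒{Aᵢ} is the family of all sets containing at least one element of each Aᵢ and Υ replaces each element u by φ(u), the proposition ¬p is true under F iff p is not true under F (assuming ν has no fixed points and each Aᵢ is nonempty, with choice). -/
import Mathlib


/-- Truth of an elementary proposition under an interpretation value F. -/
def IsTrueVal {B : Type*} (F : Set (Set (B × B))) : Prop :=
  ∃ X ∈ F, ∀ u ∈ X, u.1 = u.2

open Classical in
/-- φ(⟨x,y⟩) = ⟨x, ν x⟩ if y = x, and ⟨x, x⟩ otherwise. -/
noncomputable def phiPair {B : Type*} (ν : B → B) (p : B × B) : B × B :=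
  if p.2 = p.1 then (p.1, ν p.1) else (p.1, p.1)

/-- ⩒F : the family of all sets containing at least one element of each member of F. -/
def bigVee {B : Type*} (F : Set (Set (B × B))) : Set (Set (B × B)) :=
  {S | ∀ A ∈ F, ∃ u ∈ A, u ∈ S}

/-- Υ replaces each element u by φ(u), applied to each set of a family. -/
noncomputable def upsilon {B : Type*} (ν : B → B) (F : Set (Set (B × B))) :
    Set (Set (B × B)) :=
  (fun S => (phiPair ν) '' S) '' F

/-- With F(¬p) = Υ(⩒F(p)), the negation ¬p is true under F iff p is not true under F,
assuming ν is a fixed-point-free involution, F(p) is a nonempty family of nonempty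
subsets of B₁ = {⟨x,y⟩ | y = x ∨ y = ν x}. -/
theorem neg_true_iff_not_true {B : Type*} (ν : B → B)
    (hinv : Function.Involutive ν) (hfix : ∀ x, ν x ≠ x)
    (F : Set (Set (B × B))) (hFne : F.Nonempty)
    (hAne : ∀ A ∈ F, A.Nonempty)
    (hB1 : ∀ A ∈ F, ∀ u ∈ A, u.2 = u.1 ∨ u.2 = ν u.1) :
    IsTrueVal (upsilon ν (bigVee F)) ↔ ¬ IsTrueVal F := by
  constructor
  · rintro ⟨Y, ⟨S, hS, rfl⟩, hY⟩ ⟨X, hX, hXd⟩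
    obtain ⟨u, huX, huS⟩ := hS X hX
    have h2 := hY _ ⟨u, huS, rfl⟩
    have hd : u.2 = u.1 := (hXd u huX).symm
    simp only [phiPair, hd, if_pos] at h2
    exact hfix u.1 h2.symm
  · intro h
    refine ⟨phiPair ν '' {u | u.2 ≠ u.1}, ⟨_, ?_, rfl⟩, ?_⟩
    · intro A hA
      by_contra hc
      push_neg at hc
      exact h ⟨A, hA, fun u hu => by
        have := hc u hu
        simp only [Set.mem_setOf_eq, not_not] at this
        exact this.symm⟩
    · rintro _ ⟨u, hu, rfl⟩
      simp only [Set.mem_setOf_eq] at hu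
      simp [phiPair, hu]
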